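/- arXiv:1701.02109 — 2 statements merged into one kernel-verified Lean document; each statement's English description precedes it below -/
import Mathlib

section
/- For every i ∈ [n], the noncrossing partition x_i whose unique non-singleton block is {1, 2, ..., i-1} ∪ {n} is a left-modular element of the noncrossing partition lattice (NC_n, ≤_dref); that is, for all y ≤ z in NC_n, (y ∨ x_i) ∧ z = y ∨ (x_i ∧ z). -/
/-- A set partition of `[n]` (as a setoid on `Fin n`) is noncrossing. -/
def IsNoncrossing {n : ℕ} (x : Setoid (Fin n)) : Prop :=
  ∀ i j k l : Fin n, i < j → j < k → k < l → x.r i k → x.r j l → x.r i j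

/-- `B` is a block of the set partition `x`. -/
def IsBlock {n : ℕ} (x : Setoid (Fin n)) (B : Set (Fin n)) : Prop :=
  ∃ a, B = {b | x.r a b}

/-- The set partition whose unique (possibly) non-singleton block is `S`. -/
def blockSetoid {n : ℕ} (S : Set (Fin n)) : Setoid (Fin n) where
  r a b := a = b ∨ (a ∈ S ∧ b ∈ S)
  iseqv := by
    refine ⟨fun _ => Or.inl rfl, ?_, ?_⟩
    · rintro a b (rfl | ⟨h1, h2⟩)
      · exact Or.inl rfl
      · exact Or.inr ⟨h2, h1⟩
    · rintro a b c (rfl | ⟨h1, h2⟩) h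
      · exact h
      · rcases h with rfl | ⟨h3, h4⟩
        · exact Or.inr ⟨h1, h2⟩
        · exact Or.inr ⟨h1, h4⟩

/-- The element `x_i` of the left-modular chain: its unique non-singleton block is
`[i-1] ∪ {n}` (in 1-based terms), i.e. the elements with value `< i-1` or value `n-1`. -/
def xChain (n i : ℕ) : Setoid (Fin n) :=
  blockSetoid {a : Fin n | a.val + 1 < i ∨ a.val = n - 1}

/-- The noncrossing closure: the smallest noncrossing partition above `x`. -/
def ncClosure {n : ℕ} (x : Setoid (Fin n)) : Setoid (Fin n) :=
  sInf {y | IsNoncrossing y ∧ x ≤ y}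

/-- The join of two noncrossing partitions in `NC_n`. -/
def joinNC {n : ℕ} (x y : Setoid (Fin n)) : Setoid (Fin n) :=
  ncClosure (x ⊔ y)

/-- The join of a set of noncrossing partitions in `NC_n`. -/
def joinSetNC {n : ℕ} (X : Set (Setoid (Fin n))) : Setoid (Fin n) :=
  ncClosure (sSup X)

/-- Membership in `PE_n`: noncrossing, `{n-1, n}` is not a block, and it is not the case
that `{n}` is a singleton block while `1 ∼ n-1`. -/
def PEmem {n : ℕ} (x : Setoid (Fin n)) : Prop :=
  IsNoncrossing x ∧
  ¬ IsBlock x {a : Fin n | a.val = n - 2 ∨ a.val = n - 1} ∧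
  ¬ (IsBlock x {a : Fin n | a.val = n - 1} ∧
      ∃ a b : Fin n, a.val = 0 ∧ b.val = n - 2 ∧ x.r a b)

/-- `m` is the meet of `x` and `y` in the poset `PE_n`. -/
def IsMeetPE {n : ℕ} (x y m : Setoid (Fin n)) : Prop :=
  PEmem m ∧ m ≤ x ∧ m ≤ y ∧ ∀ z, PEmem z → z ≤ x → z ≤ y → z ≤ m

/-- `j` is the join of `x` and `y` in the poset `PE_n`. -/
def IsJoinPE {n : ℕ} (x y j : Setoid (Fin n)) : Prop :=
  PEmem j ∧ x ≤ j ∧ y ≤ j ∧ ∀ z, PEmem z → x ≤ z → y ≤ z → j ≤ z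

/-- `x ⋖ y` in `PE_n`. -/
def CovPE {n : ℕ} (x y : Setoid (Fin n)) : Prop :=
  PEmem x ∧ PEmem y ∧ x < y ∧ ∀ z, PEmem z → x < z → ¬ z < y

/-- The atoms of `NC_n`: partitions `a_{i,j}` with unique non-singleton block `{i, j}`. -/
def IsAtomNC {n : ℕ} (a : Setoid (Fin n)) : Prop :=
  ∃ i j : Fin n, i < j ∧ a = blockSetoid {i, j}

/-- The partial order `≼` on atoms of `NC_n` induced by the classes
`A_j = {a : a ≤ x_j and a ≰ x_{j-1}}`. -/
def atomPrec {n : ℕ} (a b : Setoid (Fin n)) : Prop :=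
  ∃ i j : ℕ, 1 ≤ i ∧ i < j ∧ j ≤ n - 1 ∧
    (a ≤ xChain n i ∧ ¬ a ≤ xChain n (i - 1)) ∧
    (b ≤ xChain n j ∧ ¬ b ≤ xChain n (j - 1))

/-- A set of atoms of `NC_n` is bounded below (BB). -/
def IsBBset {n : ℕ} (X : Set (Setoid (Fin n))) : Prop :=
  ∀ d ∈ X, ∃ a, IsAtomNC a ∧ atomPrec a d ∧ a < joinSetNC X

/-- A set of atoms of `NC_n` is NBB: no nonempty subset is bounded below. -/
def IsNBBset {n : ℕ} (X : Set (Setoid (Fin n))) : Prop :=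
  ∀ Y ⊆ X, Y.Nonempty → ¬ IsBBset Y

/-- `X` is an NBB base for the top element of `NC_n`. -/
def IsNBBBaseTop {n : ℕ} (X : Set (Setoid (Fin n))) : Prop :=
  (∀ a ∈ X, IsAtomNC a) ∧ IsNBBset X ∧ joinSetNC X = ⊤

/-- The graph `τ(X)` on vertex set `[n]` associated with a set `X` of atoms:
`i` and `j` are adjacent iff `a_{i,j} ∈ X`. -/
def atomGraph {n : ℕ} (X : Set (Setoid (Fin n))) : SimpleGraph (Fin n) where
  Adj i j := i ≠ j ∧ blockSetoid ({i, j} : Set (Fin n)) ∈ X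
  symm := ⟨by
    rintro i j ⟨hne, hm⟩
    exact ⟨hne.symm, by rwa [Set.pair_comm]⟩⟩
  loopless := ⟨fun i h => h.1 rfl⟩

/-- The parking label of the cover `x ⋖ y` is `p`: `y` merges blocks `B₁, B₂` of `x` with
`min B₁ < min B₂`, and `p = max { j ∈ B₁ : j ≤ i for all i ∈ B₂ }`. -/
def ParkingLabelIs {n : ℕ} (x y : Setoid (Fin n)) (p : Fin n) : Prop :=
  ∃ B₁ B₂ : Set (Fin n), IsBlock x B₁ ∧ IsBlock x B₂ ∧ B₁ ≠ B₂ ∧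
    IsBlock y (B₁ ∪ B₂) ∧
    (∃ a ∈ B₁, ∀ b ∈ B₂, a < b) ∧
    p ∈ B₁ ∧ (∀ i ∈ B₂, p ≤ i) ∧ (∀ j ∈ B₁, (∀ i ∈ B₂, j ≤ i) → j ≤ p)

/-- The label of the cover `w ⋖ z` in the `S_n` EL-labeling of `PE_n` coming from the
left-modular chain: `λ(w,z) = min { i-1 : x_i ≰ w and x_i ≤ z }`. -/
def LabelIs (n : ℕ) (w z : Setoid (Fin n)) (v : ℕ) : Prop :=
  ∃ i : ℕ, 1 ≤ i ∧ i ≤ n ∧ i - 1 = v ∧ (¬ xChain n i ≤ w ∧ xChain n i ≤ z) ∧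
    ∀ j : ℕ, 1 ≤ j → j ≤ n → (¬ xChain n j ≤ w ∧ xChain n j ≤ z) → i ≤ j

/-- The sequence of edge labels along a (saturated) chain, recorded as a list. -/
def chainLabels {α Λ : Type*} (lab : α → α → Λ) (c : List α) : List Λ :=
  List.zipWith lab c c.tail

/-- `c` is a saturated chain from `a` to `b` with respect to the cover relation `cov`. -/
def IsSatChainList {α : Type*} (cov : α → α → Prop) (a b : α) (c : List α) : Prop :=
  c.head? = some a ∧ c.getLast? = some b ∧ c.Chain' cov

/-- A chain is rising if its label sequence is strictly increasing. -/
def RisingChain {α Λ : Type*} [LT Λ] (lab : α → α → Λ) (c : List α) : Prop :=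
  (chainLabels lab c).Chain' (· < ·)

/-- `lab` is an EL-labeling with respect to the cover relation `cov` and order `le`:
every interval has a unique rising maximal chain, which is lexicographically least. -/
def IsELLabeling {α Λ : Type*} [PartialOrder Λ] (cov : α → α → Prop) (le : α → α → Prop)
    (lab : α → α → Λ) : Prop :=
  ∀ a b, le a b → ∃ c : List α, IsSatChainList cov a b c ∧ RisingChain lab c ∧
    (∀ c', IsSatChainList cov a b c' → RisingChain lab c' → c' = c) ∧
    (∀ c', IsSatChainList cov a b c' → c' ≠ c →
      List.Lex (· < ·) (chainLabels lab c) (chainLabels lab c'))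

/-
Joining `y` with a partition having a single non-singleton block `S` merges the blocks of `y`
meeting `S` into one block `B` and leaves the others alone. For `S = [i-1] ∪ {n}` no block of
a noncrossing `y` outside `B` can straddle a point of `B`: a witness of `S` to the left of it
or at `n` would make `y` cross. So `y ∨ x_i` is already noncrossing, the join in `NC_n` is the
join of partitions, and there left-modularity of a one-block partition is immediate: if
`a ∼ s ∈ S` and `b ∼ t ∈ S` in `y` and `a ∼ b` in `z ≥ y`, then `s ∼ t` in `x_i ∧ z`.
-/

section Saturation

variable {α : Type*}

def saturation (y : Setoid α) (S : Set α) : Set α :=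
  {u | ∃ s ∈ S, y.r u s}

lemma subset_saturation (y : Setoid α) (S : Set α) : S ⊆ saturation y S :=
  fun s hs => ⟨s, hs, y.refl s⟩

lemma mem_saturation_of_rel {y : Setoid α} {S : Set α} {a b : α} (hab : y.r a b)
    (hb : b ∈ saturation y S) : a ∈ saturation y S :=
  let ⟨s, hs, hbs⟩ := hb
  ⟨s, hs, y.trans hab hbs⟩

def mergeBlocks (y : Setoid α) (S : Set α) : Setoid α where
  r a b := y.r a b ∨ (a ∈ saturation y S ∧ b ∈ saturation y S)
  iseqv := by
    refine ⟨fun a => Or.inl (y.refl a), ?_, ?_⟩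
    · rintro a b (h | ⟨ha, hb⟩)
      · exact Or.inl (y.symm h)
      · exact Or.inr ⟨hb, ha⟩
    · rintro a b c (hab | ⟨ha, hb⟩) (hbc | ⟨hb', hc⟩)
      · exact Or.inl (y.trans hab hbc)
      · exact Or.inr ⟨mem_saturation_of_rel hab hb', hc⟩
      · exact Or.inr ⟨ha, mem_saturation_of_rel (y.symm hbc) hb⟩
      · exact Or.inr ⟨ha, hc⟩

end Saturation

section PartitionLattice

variable {n : ℕ}

lemma sup_blockSetoid_eq_mergeBlocks (y : Setoid (Fin n)) (S : Set (Fin n)) :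
    y ⊔ blockSetoid S = mergeBlocks y S := by
  apply le_antisymm
  · refine sup_le (fun _ _ h => Or.inl h) ?_
    rintro a b (rfl | ⟨ha, hb⟩)
    · exact Or.inl (y.refl a)
    · exact Or.inr ⟨subset_saturation y S ha, subset_saturation y S hb⟩
  · rintro a b (h | ⟨⟨s, hs, has⟩, ⟨t, ht, hbt⟩⟩)
    · exact (le_sup_left : y ≤ y ⊔ blockSetoid S) h
    · exact (y ⊔ blockSetoid S).trans ((le_sup_left : y ≤ _) has) <|
        (y ⊔ blockSetoid S).trans ((le_sup_right : blockSetoid S ≤ _) (Or.inr ⟨hs, ht⟩)) <|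
          (le_sup_left : y ≤ _) (y.symm hbt)

lemma sup_blockSetoid_inf_le {y z : Setoid (Fin n)} (S : Set (Fin n)) (hyz : y ≤ z) :
    (y ⊔ blockSetoid S) ⊓ z ≤ y ⊔ (blockSetoid S ⊓ z) := by
  rintro a b ⟨hab, hzab⟩
  rw [sup_blockSetoid_eq_mergeBlocks] at hab
  rcases hab with h | ⟨⟨s, hs, has⟩, ⟨t, ht, hbt⟩⟩
  · exact (le_sup_left : y ≤ y ⊔ (blockSetoid S ⊓ z)) h
  · have hst : (blockSetoid S ⊓ z).r s t :=
      ⟨Or.inr ⟨hs, ht⟩, z.trans (z.symm (hyz has)) (z.trans hzab (hyz hbt))⟩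
    exact (y ⊔ (blockSetoid S ⊓ z)).trans ((le_sup_left : y ≤ _) has) <|
      (y ⊔ (blockSetoid S ⊓ z)).trans ((le_sup_right : blockSetoid S ⊓ z ≤ _) hst) <|
        (le_sup_left : y ≤ _) (y.symm hbt)

lemma isNoncrossing_mergeBlocks {y : Setoid (Fin n)} {S : Set (Fin n)} (hy : IsNoncrossing y)
    (hB : ∀ a b c, y.r a c → a ∉ saturation y S → a < b → b < c → b ∉ saturation y S) :
    IsNoncrossing (mergeBlocks y S) := by
  rintro a b c d hab hbc hcd (hac | ⟨haB, hcB⟩) (hbd | ⟨hbB, -⟩)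
  · exact Or.inl (hy a b c d hab hbc hcd hac hbd)
  · by_contra haB
    exact hB a b c hac (fun h => haB (Or.inr ⟨h, hbB⟩)) hab hbc hbB
  · by_contra hbB
    exact hB b c d hbd (fun h => hbB (Or.inr ⟨haB, h⟩)) hbc hcd hcB
  · exact Or.inr ⟨haB, hbB⟩

lemma ncClosure_le {x y : Setoid (Fin n)} (hy : IsNoncrossing y) (hxy : x ≤ y) :
    ncClosure x ≤ y :=
  sInf_le ⟨hy, hxy⟩

lemma le_ncClosure (x : Setoid (Fin n)) : x ≤ ncClosure x :=
  le_sInf fun _ h => h.2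

lemma ncClosure_eq_self {x : Setoid (Fin n)} (hx : IsNoncrossing x) : ncClosure x = x :=
  le_antisymm (ncClosure_le hx le_rfl) (le_ncClosure x)

end PartitionLattice

lemma notMem_saturation_xChain_of_between {n i : ℕ} {y : Setoid (Fin n)} (hy : IsNoncrossing y)
    {a b c : Fin n} (hac : y.r a c) (ha : a ∉ saturation y {u | u.val + 1 < i ∨ u.val = n - 1})
    (hab : a < b) (hbc : b < c) : b ∉ saturation y {u | u.val + 1 < i ∨ u.val = n - 1} := by
  rintro ⟨s, hs | hs, hbs⟩
  · have hsa : s < a := by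
      have : ¬ a.val + 1 < i := fun h => ha (subset_saturation y _ (Or.inl h))
      rw [Fin.lt_def]
      omega
    exact ha ⟨s, Or.inl hs, y.symm (hy s a b c hsa hab hbc (y.symm hbs) hac)⟩
  · have hcs : c < s := by
      have : c.val ≠ n - 1 := fun h =>
        ha (mem_saturation_of_rel hac (subset_saturation y _ (Or.inr h)))
      rw [Fin.lt_def]
      omega
    exact ha ⟨s, Or.inr hs, y.trans (hy a b c s hab hbc hcs hac hbs) hbs⟩

lemma isNoncrossing_sup_xChain {n : ℕ} (i : ℕ) {y : Setoid (Fin n)} (hy : IsNoncrossing y) :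
    IsNoncrossing (y ⊔ xChain n i) := by
  rw [xChain, sup_blockSetoid_eq_mergeBlocks]
  exact isNoncrossing_mergeBlocks hy fun _ _ _ => notMem_saturation_xChain_of_between hy

theorem xChain_leftModular_NC_general (n i : ℕ)
    (y z : Setoid (Fin n)) (hy : IsNoncrossing y) (hz : IsNoncrossing z) (hyz : y ≤ z) :
    joinNC y (xChain n i) ⊓ z = joinNC y (xChain n i ⊓ z) := by
  have hjoin : joinNC y (xChain n i) = y ⊔ xChain n i :=
    ncClosure_eq_self (isNoncrossing_sup_xChain i hy)
  rw [hjoin]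
  apply le_antisymm
  · exact (sup_blockSetoid_inf_le _ hyz).trans (le_ncClosure _)
  · refine le_inf ?_ (ncClosure_le hz (sup_le hyz inf_le_right))
    exact ncClosure_le (isNoncrossing_sup_xChain i hy) (sup_le_sup_left inf_le_left y)

/-- For `i ∈ [n]`, the noncrossing partition `x_i` with unique non-singleton
block `[i-1] ∪ {n}` is left-modular in `(NC_n, ≤_dref)`: for all noncrossing `y ≤ z`,
`(y ∨ x_i) ∧ z = y ∨ (x_i ∧ z)` (meets in `NC_n` being common refinements, joins
noncrossing closures of partition-lattice joins). -/
theorem xChain_leftModular_NC (n i : ℕ) (h1 : 1 ≤ i) (h2 : i ≤ n)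
    (y z : Setoid (Fin n)) (hy : IsNoncrossing y) (hz : IsNoncrossing z) (hyz : y ≤ z) :
    joinNC y (xChain n i) ⊓ z = joinNC y (xChain n i ⊓ z) :=
  xChain_leftModular_NC_general n i y z hy hz hyz
end

section
/- For n ≥ 3, the lattice (PE_n, ≤_dref) is graded: if x ⋖ y is a cover relation in PE_n, then the number of blocks of x exceeds the number of blocks of y by exactly one. -/
namespace Setoid

variable {α : Type*} {x y : Setoid α} {a b : α}

def merge (x : Setoid α) (a b : α) : Setoid α where
  r p q := x p q ∨ ((x p a ∨ x p b) ∧ (x q a ∨ x q b))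
  iseqv := by
    have closed : ∀ {p q}, x p q → (x p a ∨ x p b) → (x q a ∨ x q b) := fun hpq h =>
      h.imp (x.trans' (x.symm' hpq)) (x.trans' (x.symm' hpq))
    refine ⟨fun p => Or.inl (x.refl' p), fun h => h.imp x.symm' And.symm, ?_⟩
    rintro p q r (hpq | ⟨hp, hq⟩) (hqr | ⟨hq', hr⟩)
    · exact Or.inl (x.trans' hpq hqr)
    · exact Or.inr ⟨closed (x.symm' hpq) hq', hr⟩
    · exact Or.inr ⟨hp, closed hqr hq⟩
    · exact Or.inr ⟨hp, hr⟩

theorem le_merge (x : Setoid α) (a b : α) : x ≤ x.merge a b := fun _ _ => Or.inl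

theorem merge_rel (x : Setoid α) (a b : α) : x.merge a b a b :=
  Or.inr ⟨Or.inl (x.refl' a), Or.inr (x.refl' b)⟩

theorem lt_merge (hab : ¬ x a b) : x < x.merge a b :=
  (x.le_merge a b).lt_of_ne fun h => hab (h ▸ x.merge_rel a b)

theorem merge_le (hxy : x ≤ y) (hab : y a b) : x.merge a b ≤ y := by
  have hU : ∀ {p}, x p a ∨ x p b → y p a :=
    fun h => h.elim (fun h => hxy h) fun h => y.trans' (hxy h) (y.symm' hab)
  rintro p q (hpq | ⟨hp, hq⟩)
  · exact hxy hpq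
  · exact y.trans' (hU hp) (y.symm' (hU hq))

theorem setOf_merge_rel_of_rel {r : α} (hr : x r a ∨ x r b) :
    {c | x.merge a b c r} = {c | x c a} ∪ {c | x c b} := by
  ext c
  refine ⟨fun hc => hc.elim (fun h => hr.imp (x.trans' h) (x.trans' h)) And.left,
    fun hc => Or.inr ⟨hc, hr⟩⟩

theorem setOf_merge_rel_of_not_rel {r : α} (hr : ¬ (x r a ∨ x r b)) :
    {c | x.merge a b c r} = {c | x c r} := by
  ext c
  exact ⟨fun hc => hc.resolve_right fun h => hr h.2, Or.inl⟩

theorem setOf_rel_eq_setOf_rel_iff {p q : α} : {c | x c p} = {c | x c q} ↔ x p q :=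
  ⟨fun h => (h ▸ x.refl' p : p ∈ {c | x c q}),
    fun h => Set.ext fun _ => ⟨fun hc => x.trans' hc h, fun hc => x.trans' hc (x.symm' h)⟩⟩

theorem classes_merge :
    (x.merge a b).classes =
      insert ({c | x c a} ∪ {c | x c b}) (x.classes \ {{c | x c a}, {c | x c b}}) := by
  ext S
  simp only [classes, Set.mem_insert_iff, Set.mem_sdiff, Set.mem_ofPred_eq, Set.mem_singleton_iff]
  constructor
  · rintro ⟨r, rfl⟩
    by_cases hr : x r a ∨ x r b
    · exact Or.inl (setOf_merge_rel_of_rel hr)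
    · rw [setOf_merge_rel_of_not_rel hr, setOf_rel_eq_setOf_rel_iff, setOf_rel_eq_setOf_rel_iff]
      exact Or.inr ⟨⟨r, rfl⟩, hr⟩
  · rintro (rfl | ⟨⟨r, rfl⟩, hr⟩)
    · exact ⟨a, (setOf_merge_rel_of_rel (Or.inl (x.refl' a))).symm⟩
    · rw [setOf_rel_eq_setOf_rel_iff, setOf_rel_eq_setOf_rel_iff] at hr
      exact ⟨r, (setOf_merge_rel_of_not_rel hr).symm⟩

theorem ncard_classes_merge [Finite α] (hab : ¬ x a b) :
    x.classes.ncard = (x.merge a b).classes.ncard + 1 := by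
  have hne : {c | x c a} ≠ {c | x c b} := fun h => hab (setOf_rel_eq_setOf_rel_iff.mp h)
  have hsub : {{c | x c a}, {c | x c b}} ⊆ x.classes :=
    Set.insert_subset (x.mem_classes a) (Set.singleton_subset_iff.mpr (x.mem_classes b))
  have hU : {c | x c a} ∪ {c | x c b} ∉ x.classes := by
    rintro ⟨r, hr⟩
    have ha : a ∈ {c | x c r} := hr ▸ Or.inl (x.refl' a)
    have hb : b ∈ {c | x c r} := hr ▸ Or.inr (x.refl' b)
    exact hab (x.trans' ha (x.symm' hb))
  rw [classes_merge, Set.ncard_insert_of_notMem (fun h => hU h.1), Set.ncard_sdiff hsub,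
    Set.ncard_pair hne]
  have := Set.ncard_le_ncard hsub
  rw [Set.ncard_pair hne] at this
  omega

end Setoid

section

variable {n : ℕ} {x y : Setoid (Fin n)}

theorem isBlock_iff_mem_classes {B : Set (Fin n)} : IsBlock x B ↔ B ∈ x.classes := by
  simp only [IsBlock, Setoid.classes, Set.mem_ofPred_eq, x.comm']

theorem setOf_isBlock_eq_classes (x : Setoid (Fin n)) : {B | IsBlock x B} = x.classes :=
  Set.ext fun _ => isBlock_iff_mem_classes

theorem isBlock_singleton_iff {w : Fin n} : IsBlock x {w} ↔ ∀ c, x w c → c = w := by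
  constructor
  · rintro ⟨a, ha⟩ c hc
    have hw : x a w := (ha ▸ rfl : w ∈ {b | x a b})
    exact (ha ▸ x.trans' hw hc : c ∈ ({w} : Set (Fin n)))
  · intro h
    exact ⟨w, Set.ext fun c => ⟨fun hc => (Set.mem_singleton_iff.mp hc) ▸ x.refl' w,
      fun hc => h c hc⟩⟩

theorem IsNoncrossing.merge_of_minimal (hx : IsNoncrossing x) (hy : IsNoncrossing y)
    (hxy : x ≤ y) {m b : Fin n} (hmb : y m b) (hmin : ∀ c, y m c → m ≤ c)
    (hbmin : ∀ c, y m c → ¬ x m c → b ≤ c) : IsNoncrossing (x.merge m b) := by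
  have hU : ∀ {c}, x c m ∨ x c b → y m c := fun h =>
    h.elim (fun h => y.symm' (hxy h)) fun h => y.trans' hmb (y.symm' (hxy h))
  have merged : ∀ {c d}, x c m ∨ x c b → x d m ∨ x d b → x.merge m b c d :=
    fun hc hd => Or.inr ⟨hc, hd⟩
  -- `b ≤ c` by the choice of `b`, so a crossing with the `x`-block of `b` puts `c` into it
  have join_b : ∀ {c d e}, y m c → ¬ x m c → c < d → d < e → x b d → x c e → x c b :=
    fun hmc hnc hcd hde hbd hce => by
      rcases (hbmin _ hmc hnc).eq_or_lt with rfl | hbc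
      · exact x.refl' _
      · exact x.symm' (hx _ _ _ _ hbc hcd hde hbd hce)
  intro i j k l hij hjk hkl hik hjl
  rcases hik with hik | ⟨hi, hk⟩ <;> rcases hjl with hjl | ⟨hj, hl⟩
  · exact Or.inl (hx i j k l hij hjk hkl hik hjl)
  · have hmi : y m i := y.trans' (hU hj) (y.symm' (hy i j k l hij hjk hkl (hxy hik)
      (y.trans' (y.symm' (hU hj)) (hU hl))))
    by_cases hxmi : x m i
    · exact merged (Or.inl (x.symm' hxmi)) hj
    rcases hj with hjm | hjb
    · rcases hl with hlm | hlb
      · exact Or.inl (hx i j k l hij hjk hkl hik (x.trans' hjm (x.symm' hlm)))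
      · have hm_lt : m < i := (hmin i hmi).lt_of_ne fun h => hxmi (h ▸ x.refl' m)
        exact absurd (hx m i j k hm_lt hij hjk (x.symm' hjm) hik) hxmi
    · exact merged (Or.inr (join_b hmi hxmi hij hjk (x.symm' hjb) hik)) (Or.inr hjb)
  · have hmj : y m j := y.trans' (hU hi) (hy i j k l hij hjk hkl
      (y.trans' (y.symm' (hU hi)) (hU hk)) (hxy hjl))
    by_cases hxmj : x m j
    · exact merged hi (Or.inl (x.symm' hxmj))
    rcases hk with hkm | hkb
    · have hm_lt : m < j := (hmin i (hU hi)).trans_lt hij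
      exact absurd (hx m j k l hm_lt hjk hkl (x.symm' hkm) hjl) hxmj
    · exact merged hi (Or.inr (join_b hmj hxmj hjk hkl (x.symm' hkb) hjl))
  · exact merged hi hj

theorem IsNoncrossing.merge_bot_top (hx : IsNoncrossing x) {o t : Fin n} (ho : ∀ c, o ≤ c)
    (ht : ∀ c, c ≤ t) (hsing : ∀ c, x t c → c = t) : IsNoncrossing (x.merge o t) := by
  have rel_bot : ∀ {c d}, c < d → x c o ∨ x c t → x c o := fun hcd hc =>
    hc.resolve_right fun h => (hcd.trans_le (ht _)).ne (hsing _ (x.symm' h))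
  intro i j k l hij hjk hkl hik hjl
  rcases hik with hik | ⟨hi, hk⟩ <;> rcases hjl with hjl | ⟨hj, hl⟩
  · exact Or.inl (hx i j k l hij hjk hkl hik hjl)
  · have hjo := rel_bot (hjk.trans hkl) hj
    by_cases hio : x i o
    · exact Or.inr ⟨Or.inl hio, hj⟩
    rcases hl with hlo | hlt
    · exact Or.inl (hx i j k l hij hjk hkl hik (x.trans' hjo (x.symm' hlo)))
    · have ho_lt : o < i := (ho i).lt_of_ne fun h => hio (h ▸ x.refl' o)
      exact absurd (x.symm' (hx o i j k ho_lt hij hjk (x.symm' hjo) hik)) hio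
  · exact Or.inl (hx i j k l hij hjk hkl
      (x.trans' (rel_bot (hij.trans (hjk.trans hkl)) hi) (x.symm' (rel_bot hkl hk))) hjl)
  · exact Or.inr ⟨hi, hj⟩

theorem IsNoncrossing.exists_merge (hx : IsNoncrossing x) (hy : IsNoncrossing y)
    (hxy : x ≤ y) {p q : Fin n} (hpq : y p q) (hnpq : ¬ x p q) :
    ∃ m b, y p m ∧ y m b ∧ ¬ x m b ∧ (∀ c, y m c → m ≤ c) ∧ IsNoncrossing (x.merge m b) := by
  obtain ⟨m, hpm, hmin⟩ := Set.exists_min_image {c | y p c} id (Set.toFinite _) ⟨p, y.refl' p⟩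
  have hmin' : ∀ c, y m c → m ≤ c := fun c hc => hmin c (y.trans' hpm hc)
  have hne : {c | y m c ∧ ¬ x m c}.Nonempty := by
    by_cases hmp : x m p
    · exact ⟨q, y.trans' (y.symm' hpm) hpq, fun hmq => hnpq (x.trans' (x.symm' hmp) hmq)⟩
    · exact ⟨p, y.symm' hpm, hmp⟩
  obtain ⟨b, ⟨hmb, hnmb⟩, hbmin⟩ := Set.exists_min_image _ id (Set.toFinite _) hne
  exact ⟨m, b, hpm, hmb, hnmb, hmin',
    hx.merge_of_minimal hy hxy hmb hmin' fun c hmc hnmc => hbmin c ⟨hmc, hnmc⟩⟩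

def MemL1 (x : Setoid (Fin n)) : Prop :=
  IsBlock x {a : Fin n | a.val = n - 2 ∨ a.val = n - 1}

def MemL2 (x : Setoid (Fin n)) : Prop :=
  IsBlock x {a : Fin n | a.val = n - 1} ∧ ∃ a b : Fin n, a.val = 0 ∧ b.val = n - 2 ∧ x a b

theorem PEmem_iff : PEmem x ↔ IsNoncrossing x ∧ ¬ MemL1 x ∧ ¬ MemL2 x := Iff.rfl

theorem not_memL1_merge {m b : Fin n} (hmb : y m b) (hnmb : ¬ x m b)
    (hmin : ∀ c, y m c → m ≤ c) (hx : ¬ MemL1 x) (hy : ¬ MemL1 y) :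
    ¬ MemL1 (x.merge m b) := by
  intro h
  rw [MemL1, isBlock_iff_mem_classes, Setoid.classes_merge] at h
  rcases h with hU | ⟨hS, -⟩
  · have hm : m ∈ {a : Fin n | a.val = n - 2 ∨ a.val = n - 1} := hU ▸ Or.inl (x.refl' m)
    have hb : b ∈ {a : Fin n | a.val = n - 2 ∨ a.val = n - 1} := hU ▸ Or.inr (x.refl' b)
    simp only [Set.mem_ofPred_eq] at hm hb
    have hm_lt : m.val < b.val := (hmin b hmb).lt_of_ne fun h => hnmb (h ▸ x.refl' m)
    refine hy ⟨m, Set.ext fun c => ⟨fun hc => ?_, fun hc => ?_⟩⟩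
    · rcases hc with hc | hc
      · exact (Fin.ext (by omega) : m = c) ▸ y.refl' m
      · exact (Fin.ext (by omega) : b = c) ▸ hmb
    · have : m.val ≤ c.val := hmin c hc
      have := c.isLt
      change c.val = n - 2 ∨ c.val = n - 1
      omega
  · exact hx (isBlock_iff_mem_classes.mpr hS)

theorem setOf_val_eq_singleton {t : Fin n} {k : ℕ} (ht : t.val = k) :
    {a : Fin n | a.val = k} = {t} :=
  Set.ext fun a => by simp only [Set.mem_ofPred_eq, Set.mem_singleton_iff, Fin.ext_iff, ht]

theorem memL2_iff {o s t : Fin n} (ho : o.val = 0) (hs : s.val = n - 2)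
    (ht : t.val = n - 1) : MemL2 x ↔ (∀ c, x t c → c = t) ∧ x o s := by
  rw [MemL2, setOf_val_eq_singleton ht, isBlock_singleton_iff]
  refine and_congr_right fun _ => ⟨?_, fun h => ⟨o, s, ho, hs, h⟩⟩
  rintro ⟨a, b, ha, hb, hab⟩
  rwa [Fin.ext (ha.trans ho.symm), Fin.ext (hb.trans hs.symm)] at hab

theorem memL2_merge {o s t : Fin n} (ho : o.val = 0) (hs : s.val = n - 2)
    (ht : t.val = n - 1) {a b : Fin n} (h : MemL2 (x.merge a b)) (hx : ¬ MemL2 x) :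
    (∀ c, x t c → c = t) ∧ (x o a ∨ x o b) := by
  rw [memL2_iff ho hs ht] at h hx
  have hsing : ∀ c, x t c → c = t := fun c hc => h.1 c (Or.inl hc)
  exact ⟨hsing, (h.2.resolve_left fun hos => hx ⟨hsing, hos⟩).1⟩

theorem exists_merge_PEmem_or {o s t : Fin n} (ho : o.val = 0) (hs : s.val = n - 2)
    (ht : t.val = n - 1) (hx : PEmem x) (hy : PEmem y) (hxy : x ≤ y) {p q : Fin n}
    (hpq : y p q) (hnpq : ¬ x p q) :
    (∃ a b, y a b ∧ ¬ x a b ∧ PEmem (x.merge a b)) ∨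
      ((∀ c, x t c → c = t) ∧ y p o ∧ y o s) := by
  obtain ⟨m, b, hpm, hmb, hnmb, hmin, hnc⟩ := hx.1.exists_merge hy.1 hxy hpq hnpq
  by_cases h2 : MemL2 (x.merge m b)
  · obtain ⟨hsing, hom | hob⟩ := memL2_merge ho hs ht h2 hx.2.2
    all_goals refine Or.inr ⟨hsing, ?_, Setoid.merge_le hxy hmb
      ((memL2_iff ho hs ht).mp h2).2⟩
    · exact y.trans' hpm (y.symm' (hxy hom))
    · exact y.trans' hpm (y.trans' hmb (y.symm' (hxy hob)))
  · exact Or.inl ⟨m, b, hmb, hnmb, hnc, not_memL1_merge hmb hnmb hmin hx.2.1 hy.2.1, h2⟩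

theorem PEmem_merge_bot_top (hn : 3 ≤ n) (hx : PEmem x) {o t : Fin n} (ho : o.val = 0)
    (ht : t.val = n - 1) (hsing : ∀ c, x t c → c = t) : PEmem (x.merge o t) := by
  have hot : o ≠ t := fun h => by have := congrArg Fin.val h; omega
  refine PEmem_iff.mpr ⟨hx.1.merge_bot_top (fun c => by simp [Fin.le_def, ho])
    (fun c => by have := c.isLt; simp only [Fin.le_def, ht]; omega)
    hsing, ?_, ?_⟩
  · intro h
    rw [MemL1, isBlock_iff_mem_classes, Setoid.classes_merge] at h
    rcases h with hU | ⟨hS, -⟩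
    · have : o ∈ {a : Fin n | a.val = n - 2 ∨ a.val = n - 1} := hU ▸ Or.inl (x.refl' o)
      simp only [Set.mem_ofPred_eq, ho] at this
      omega
    · exact hx.2.1 (isBlock_iff_mem_classes.mpr hS)
  · rintro ⟨h, -⟩
    rw [setOf_val_eq_singleton ht, isBlock_singleton_iff] at h
    exact hot (h o (x.merge_rel o t |> (x.merge o t).symm'))

theorem exists_merge_PEmem (hn : 3 ≤ n) (hx : PEmem x) (hy : PEmem y) (hxy : x < y) :
    ∃ a b, y a b ∧ ¬ x a b ∧ PEmem (x.merge a b) := by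
  obtain ⟨o, ho⟩ : ∃ o : Fin n, o.val = 0 := ⟨⟨0, by omega⟩, rfl⟩
  obtain ⟨s, hs⟩ : ∃ s : Fin n, s.val = n - 2 := ⟨⟨n - 2, by omega⟩, rfl⟩
  obtain ⟨t, ht⟩ : ∃ t : Fin n, t.val = n - 1 := ⟨⟨n - 1, by omega⟩, rfl⟩
  obtain ⟨p, q, hpq, hnpq⟩ : ∃ p q, y p q ∧ ¬ x p q := by
    by_contra! h
    exact hxy.ne (le_antisymm hxy.le fun p q => h p q)
  rcases exists_merge_PEmem_or ho hs ht hx hy hxy.le hpq hnpq with h | ⟨hsing, -, hos⟩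
  · exact h
  obtain ⟨c, htc, hct⟩ : ∃ c, y t c ∧ c ≠ t := by
    by_contra! h
    exact hy.2.2 ((memL2_iff ho hs ht).mpr ⟨h, hos⟩)
  by_cases hto : y t o
  · refine ⟨o, t, y.symm' hto, fun h => ?_, PEmem_merge_bot_top hn hx ho ht hsing⟩
    have := congrArg Fin.val (hsing o (x.symm' h))
    omega
  · rcases exists_merge_PEmem_or ho hs ht hx hy hxy.le htc fun h => hct (hsing c h) with
      h | ⟨-, hto', -⟩
    · exact h
    · exact absurd hto' hto

end

/-- For `n ≥ 3`, the lattice `(PE_n, ≤_dref)` is graded: in a cover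
relation `x ⋖ y` of `PE_n`, the number of blocks of `x` exceeds that of `y` by one. -/
theorem PE_graded (n : ℕ) (hn : 3 ≤ n) (x y : Setoid (Fin n)) (h : CovPE x y) :
    {B : Set (Fin n) | IsBlock x B}.ncard = {B : Set (Fin n) | IsBlock y B}.ncard + 1 := by
  obtain ⟨hx, hy, hxy, hcov⟩ := h
  obtain ⟨a, b, hab, hnab, hz⟩ := exists_merge_PEmem hn hx hy hxy
  have hzy : x.merge a b = y :=
    (Setoid.merge_le hxy.le hab).eq_of_not_lt (hcov _ hz (Setoid.lt_merge hnab))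
  rw [setOf_isBlock_eq_classes, setOf_isBlock_eq_classes, ← hzy]
  exact Setoid.ncard_classes_merge hnab
end
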